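/- Let U = {u_1, ..., u_n} be a finite universe and E = {x_1, ..., x_m} a finite parameter set, and let Γ_A and Λ_B be two IFS-sets over U with the same parameter set E. Then 0 ≤ S_IFS(Γ_A, Λ_B) ≤ 1. -/

import Mathlib

open scoped Classical

/-- An intuitionistic fuzzy soft set (IFS-set) over a finite universe
`U = {u_1, ..., u_n}` with parameter set `E = {x_1, ..., x_m}`:
membership and non-membership functions `μ, ν : E × U → [0,1]` with
`μ(x_i)(u_j) + ν(x_i)(u_j) ≤ 1`. -/
structure IFSSet (m n : ℕ) where
  mu : Fin m → Fin n → ℝ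
  nu : Fin m → Fin n → ℝ
  mu_nonneg : ∀ i j, 0 ≤ mu i j
  nu_nonneg : ∀ i j, 0 ≤ nu i j
  sum_le_one : ∀ i j, mu i j + nu i j ≤ 1

/-- For each parameter `x_i`, the vector in `ℝ^n` with components
`μ(x_i)(u_j) − ν(x_i)(u_j)`, `j = 1, ..., n`. -/
noncomputable def IFSSet.vec {m n : ℕ} (Γ : IFSSet m n) (i : Fin m) :
    EuclideanSpace ℝ (Fin n) :=
  WithLp.toLp 2 (fun j => Γ.mu i j - Γ.nu i j)

/-- The similarity measure `S_IFS` of two IFS-sets: the ratio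
`(Σ_i |⟨a_i, b_i⟩|) / (Σ_i max(‖a_i‖², ‖b_i‖²))` when some `a_i` or `b_i`
is nonzero, and `1` when all the vectors `a_i` and `b_i` are zero. -/
noncomputable def S_IFS {m n : ℕ} (Γ Λ : IFSSet m n) : ℝ :=
  if (∀ i, Γ.vec i = 0) ∧ (∀ i, Λ.vec i = 0) then 1
  else (∑ i, |(inner ℝ (Γ.vec i) (Λ.vec i) : ℝ)|) /
       (∑ i, max (‖Γ.vec i‖ ^ 2) (‖Λ.vec i‖ ^ 2))

/-! Termwise, Cauchy–Schwarz gives `|⟨a, b⟩| ≤ ‖a‖ ‖b‖ ≤ max (‖a‖², ‖b‖²)`, so the numerator of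
`S_IFS` is dominated by its denominator. No positivity of the denominator is needed, since
`x / 0 = 0` in Lean. -/

section RealInnerProductSpace

variable {E : Type*} [NormedAddCommGroup E] [InnerProductSpace ℝ E]

theorem abs_real_inner_le_max_norm_sq (x y : E) :
    |inner ℝ x y| ≤ max (‖x‖ ^ 2) (‖y‖ ^ 2) :=
  calc |inner ℝ x y| ≤ ‖x‖ * ‖y‖ := abs_real_inner_le_norm x y
    _ ≤ max (‖x‖ ^ 2) (‖y‖ ^ 2) := by
      rcases le_total ‖x‖ ‖y‖ with hle | hle
      · calc ‖x‖ * ‖y‖ ≤ ‖y‖ ^ 2 := by rw [sq]; gcongr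
          _ ≤ _ := le_max_right _ _
      · calc ‖x‖ * ‖y‖ ≤ ‖x‖ ^ 2 := by rw [sq]; gcongr
          _ ≤ _ := le_max_left _ _

theorem sum_abs_inner_div_sum_max_norm_sq_mem_Icc {ι : Type*} (s : Finset ι) (a b : ι → E) :
    (∑ i ∈ s, |inner ℝ (a i) (b i)|) / (∑ i ∈ s, max (‖a i‖ ^ 2) (‖b i‖ ^ 2)) ∈ Set.Icc 0 1 :=
  have hden : 0 ≤ ∑ i ∈ s, max (‖a i‖ ^ 2) (‖b i‖ ^ 2) :=
    Finset.sum_nonneg fun _ _ => (sq_nonneg _).trans (le_max_left _ _)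
  ⟨div_nonneg (Finset.sum_nonneg fun _ _ => abs_nonneg _) hden,
    div_le_one_of_le₀
      (Finset.sum_le_sum fun i _ => abs_real_inner_le_max_norm_sq (a i) (b i)) hden⟩

end RealInnerProductSpace

/-- The similarity measure of two IFS-sets lies between 0 and 1:
`0 ≤ S_IFS(Γ_A, Λ_B) ≤ 1`. -/
theorem S_IFS_mem_Icc {m n : ℕ} (Γ Λ : IFSSet m n) :
    0 ≤ S_IFS Γ Λ ∧ S_IFS Γ Λ ≤ 1 := by
  unfold S_IFS
  split_ifs
  · exact ⟨zero_le_one, le_rfl⟩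
  · exact sum_abs_inner_div_sum_max_norm_sq_mem_Icc _ _ _
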